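/- Let M > 0 and let φ : ℝ × ℝ → ℝ be a smooth function (written φ(t,s)) satisfying the radial Schwarzschild wave equation ∂_t²φ(t,s) = r(s)^{−2} ∂_s( r(s)² ∂_sφ(t,s) ) for all (t,s), and set ψ := t ∂_tφ + s ∂_sφ.2Then there is a constant C = C(M) > 0 such that for every (t,s) with t ≥ 1 and t + s ≥ max{ t/2, |s|/2 }, one has |(t − s) ∂_t²φ(t,s)| ≤ C ( |∂_tψ| + |∂_sψ| + |∂_tφ| + |∂_sφ| )(t,s) and |(t − s) ∂_s∂_tφ(t,s)| ≤ C ( |∂_tψ| + |∂_sψ| + |∂_tφ| + |∂_sφ| )(t,s). -/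

import Mathlib

open Real MeasureTheory

noncomputable section

/-- partial derivative in the first (time) variable -/
def pd_t (φ : ℝ → ℝ → ℝ) : ℝ → ℝ → ℝ := fun t s => deriv (fun t' => φ t' s) t

/-- partial derivative in the second (tortoise) variable -/
def pd_s (φ : ℝ → ℝ → ℝ) : ℝ → ℝ → ℝ := fun t s => deriv (fun s' => φ t s') s

/-- the scaling vector field `S ξ = t ∂_t ξ + s ∂_s ξ` -/
def Svf (φ : ℝ → ℝ → ℝ) : ℝ → ℝ → ℝ := fun t s => t * pd_t φ t s + s * pd_s φ t s

/-- `r` is the Schwarzschild area-radius of mass `M` in the Regge-Wheeler tortoise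
coordinate: `r(s) > 2M`, `r' = 1 - 2M/r`, `r(0) = 3M`. -/
def IsTortoise (M : ℝ) (r : ℝ → ℝ) : Prop :=
  (∀ s, 2 * M < r s) ∧ (∀ s, HasDerivAt r (1 - 2 * M / r s) s) ∧ r 0 = 3 * M

/-- `μ(s) = 2M / r(s)` -/
def muS (M : ℝ) (r : ℝ → ℝ) (s : ℝ) : ℝ := 2 * M / r s

/-- a spherically symmetric solution of the wave equation on the exterior of the
Schwarzschild spacetime: smooth, satisfying `∂_t²φ = r⁻² ∂_s(r² ∂_s φ)`, and supported
away from spatial infinity. -/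
def IsWaveSol (r : ℝ → ℝ) (φ : ℝ → ℝ → ℝ) : Prop :=
  ContDiff ℝ (⊤ : ℕ∞) (Function.uncurry φ) ∧
  (∀ t s, pd_t (pd_t φ) t s = ((r s) ^ 2)⁻¹ * deriv (fun x => (r x) ^ 2 * pd_s φ t x) s) ∧
  ∃ S₀ : ℝ, ∀ t s, S₀ + |t - 1| ≤ s → φ t s = 0

lemma aux_tortoise (M : ℝ) (hM : 0 < M) (r : ℝ → ℝ) (hr : IsTortoise M r) :
    ∀ s : ℝ, |s| * (r s - 2 * M) ≤ 3 * (r s) ^ 2 := by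
  obtain ⟨hr2M, hrd, hr0⟩ := hr
  have hrpos : ∀ s, 0 < r s := fun s => lt_trans (by linarith) (hr2M s)
  have hμ : ∀ s, 0 < 1 - 2 * M / r s := by
    intro s
    have h1 := hr2M s
    have h2 := hrpos s
    rw [sub_pos, div_lt_one h2]
    exact h1
  have hdiff : Differentiable ℝ r := fun x => (hrd x).differentiableAt
  have hmono : StrictMono r := by
    apply strictMono_of_deriv_pos
    intro x
    rw [(hrd x).deriv]
    exact hμ x
  intro s
  rcases le_or_gt 0 s with hs | hs
  · -- s ≥ 0 : r s ≥ 3M + s/3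
    have hr3 : ∀ x : ℝ, 0 ≤ x → 3 * M ≤ r x := by
      intro x hx
      rw [← hr0]
      exact hmono.monotone hx
    have hg : MonotoneOn (fun x => r x - x / 3) (Set.Ici 0) := by
      apply monotoneOn_of_deriv_nonneg (convex_Ici 0)
      · exact ((hdiff.sub (differentiable_id.div_const 3)).continuous).continuousOn
      · exact (hdiff.sub (differentiable_id.div_const 3)).differentiableOn
      · intro x hx
        rw [interior_Ici] at hx
        have hx' : (0:ℝ) ≤ x := le_of_lt hx
        have h3 := hr3 x hx'
        have hrp := hrpos x
        have : deriv (fun x => r x - x / 3) x = (1 - 2 * M / r x) - 1 / 3 := by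
          have : deriv (fun x => r x - x / 3) x = _ := ((hrd x).sub ((hasDerivAt_id x).div_const 3)).deriv
          simpa using this
        rw [this]
        have : 2 * M / r x ≤ 2 / 3 := by
          rw [div_le_div_iff₀ hrp (by norm_num)]
          linarith
        linarith
    have hkey : 3 * M ≤ r s - s / 3 := by
      have := hg (Set.self_mem_Ici) (Set.mem_Ici.2 hs) hs
      simpa [hr0] using this
    have h1 := hr2M s
    rw [abs_of_nonneg hs]
    nlinarith [hrpos s]
  · -- s < 0
    have hr3 : ∀ x : ℝ, x ≤ 0 → r x ≤ 3 * M := by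
      intro x hx
      rw [← hr0]
      exact hmono.monotone hx
    have hh : MonotoneOn (fun x => (r x - 2 * M) * Real.exp (-(x / (3 * M)))) (Set.Iic 0) := by
      have hd : Differentiable ℝ (fun x => (r x - 2 * M) * Real.exp (-(x / (3 * M)))) := by
        apply Differentiable.mul
        · exact hdiff.sub_const _
        · exact (((differentiable_id.div_const _).neg).exp)
      apply monotoneOn_of_deriv_nonneg (convex_Iic 0) hd.continuous.continuousOn
        hd.differentiableOn
      intro x hx
      rw [interior_Iic] at hx
      have hx' : x < 0 := hx
      have hr3x : r x ≤ 3 * M := hr3 x (le_of_lt hx')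
      have hrp := hrpos x
      have h2 := hr2M x
      have hde : HasDerivAt (fun x => (r x - 2 * M) * Real.exp (-(x / (3 * M))))
          ((1 - 2 * M / r x) * Real.exp (-(x / (3 * M)))
            + (r x - 2 * M) * (Real.exp (-(x / (3 * M))) * (-(1 / (3 * M))))) x := by
        have h1 : HasDerivAt (fun x : ℝ => -(x / (3 * M))) (-(1 / (3 * M))) x :=
          ((hasDerivAt_id x).div_const _).neg
        exact ((hrd x).sub_const _).mul (h1.exp)
      rw [hde.deriv]
      have hexp : 0 < Real.exp (-(x / (3 * M))) := Real.exp_pos _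
      have e1 : 1 - 2 * M / r x = (r x - 2 * M) / r x := by field_simp
      have hinv : (3 * M)⁻¹ ≤ (r x)⁻¹ := inv_anti₀ hrp hr3x
      rw [e1, div_eq_mul_inv]
      simp only [one_div]
      nlinarith [mul_nonneg (mul_nonneg (sub_nonneg.2 (le_of_lt h2)) hexp.le)
        (sub_nonneg.2 hinv)]
    have hkey : r s - 2 * M ≤ M * Real.exp (s / (3 * M)) := by
      have h0 := hh (Set.mem_Iic.2 (le_of_lt hs)) Set.self_mem_Iic (le_of_lt hs)
      simp only [hr0, neg_zero, zero_div, Real.exp_zero, mul_one] at h0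
      have h0' : (r s - 2 * M) * Real.exp (-(s / (3 * M))) ≤ M := by
        linarith
      have hepos : 0 < Real.exp (s / (3 * M)) := Real.exp_pos _
      have := mul_le_mul_of_nonneg_right h0' (le_of_lt hepos)
      rw [mul_assoc, ← Real.exp_add] at this
      simpa using this
    have hxe : -s * Real.exp (s / (3 * M)) ≤ 3 * M := by
      have h1 : -(s / (3 * M)) ≤ Real.exp (-(s / (3 * M))) := by
        have := Real.add_one_le_exp (-(s / (3 * M)))
        linarith
      have h2 : -s ≤ 3 * M * Real.exp (-(s / (3 * M))) := by
        have := mul_le_mul_of_nonneg_left h1 (le_of_lt (by linarith : (0:ℝ) < 3 * M))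
        calc -s = 3 * M * -(s / (3 * M)) := by field_simp
          _ ≤ 3 * M * Real.exp (-(s / (3 * M))) := this
      have hepos : 0 < Real.exp (s / (3 * M)) := Real.exp_pos _
      have := mul_le_mul_of_nonneg_right h2 (le_of_lt hepos)
      rw [mul_assoc, ← Real.exp_add] at this
      simpa using this
    have h2M := hr2M s
    rw [abs_of_neg hs]
    have he : 0 < Real.exp (s / (3 * M)) := Real.exp_pos _
    have hq : -s * (r s - 2 * M) ≤ 3 * M * M := by
      calc -s * (r s - 2 * M) ≤ -s * (M * Real.exp (s / (3 * M))) := by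
            apply mul_le_mul_of_nonneg_left hkey (by linarith)
        _ = (-s * Real.exp (s / (3 * M))) * M := by ring
        _ ≤ 3 * M * M := mul_le_mul_of_nonneg_right hxe (le_of_lt hM)
    nlinarith

noncomputable section
namespace KStest

variable {φ : ℝ → ℝ → ℝ} (hφ : ContDiff ℝ (⊤ : ℕ∞) (Function.uncurry φ))
include hφ

omit hφ in
-- abbreviations
def B (φ : ℝ → ℝ → ℝ) (p w v : ℝ × ℝ) : ℝ :=
  fderiv ℝ (fderiv ℝ (Function.uncurry φ)) p w v

omit hφ in
lemma hlineT (t s : ℝ) : HasDerivAt (fun t' : ℝ => (t', s)) (((1:ℝ), (0:ℝ))) t :=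
  (hasDerivAt_id t).prodMk (hasDerivAt_const t s)

omit hφ in
lemma hlineS (t s : ℝ) : HasDerivAt (fun s' : ℝ => (t, s')) (((0:ℝ), (1:ℝ))) s :=
  (hasDerivAt_const s t).prodMk (hasDerivAt_id s)

lemma pdt_eq (t s : ℝ) :
    HasDerivAt (fun t' => φ t' s) (fderiv ℝ (Function.uncurry φ) (t, s) (1, 0)) t := by
  have h := ((hφ.differentiable (by simp)) (t, s)).hasFDerivAt.comp_hasDerivAt t (hlineT t s)
  exact h

lemma pds_eq (t s : ℝ) :
    HasDerivAt (fun s' => φ t s') (fderiv ℝ (Function.uncurry φ) (t, s) (0, 1)) s := by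
  have h := ((hφ.differentiable (by simp)) (t, s)).hasFDerivAt.comp_hasDerivAt s (hlineS t s)
  exact h

lemma pdt_val (t s : ℝ) : pd_t φ t s = fderiv ℝ (Function.uncurry φ) (t, s) (1, 0) :=
  (pdt_eq hφ t s).deriv

lemma pds_val (t s : ℝ) : pd_s φ t s = fderiv ℝ (Function.uncurry φ) (t, s) (0, 1) :=
  (pds_eq hφ t s).deriv

-- derivative of p ↦ fderiv F p v
lemma hH (v : ℝ × ℝ) (p : ℝ × ℝ) :
    HasFDerivAt (fun q => fderiv ℝ (Function.uncurry φ) q v)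
      ((ContinuousLinearMap.apply ℝ ℝ v).comp
        (fderiv ℝ (fderiv ℝ (Function.uncurry φ)) p)) p := by
  have h1 : Differentiable ℝ (fderiv ℝ (Function.uncurry φ)) :=
    (hφ.fderiv_right (m := (⊤ : ℕ∞)) ((by simp))).differentiable (by simp)
  exact (ContinuousLinearMap.apply ℝ ℝ v).hasFDerivAt.comp p (h1 p).hasFDerivAt

lemma hHt (v : ℝ × ℝ) (t s : ℝ) :
    HasDerivAt (fun t' => fderiv ℝ (Function.uncurry φ) (t', s) v) (B φ (t, s) (1, 0) v) t := by
  have h := (hH hφ v (t, s)).comp_hasDerivAt t (hlineT t s)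
  exact h

lemma hHs (v : ℝ × ℝ) (t s : ℝ) :
    HasDerivAt (fun s' => fderiv ℝ (Function.uncurry φ) (t, s') v) (B φ (t, s) (0, 1) v) s := by
  have h := (hH hφ v (t, s)).comp_hasDerivAt s (hlineS t s)
  exact h

lemma Btt (t s : ℝ) : pd_t (pd_t φ) t s = B φ (t, s) (1, 0) (1, 0) := by
  have he : (fun t' => pd_t φ t' s) = fun t' => fderiv ℝ (Function.uncurry φ) (t', s) (1, 0) :=
    funext fun t' => pdt_val hφ t' s
  show deriv (fun t' => pd_t φ t' s) t = _
  rw [he]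
  exact (hHt hφ (1, 0) t s).deriv

lemma Bts (t s : ℝ) : pd_s (pd_t φ) t s = B φ (t, s) (0, 1) (1, 0) := by
  have he : (fun s' => pd_t φ t s') = fun s' => fderiv ℝ (Function.uncurry φ) (t, s') (1, 0) :=
    funext fun s' => pdt_val hφ t s'
  show deriv (fun s' => pd_t φ t s') s = _
  rw [he]
  exact (hHs hφ (1, 0) t s).deriv

lemma Bss (t s : ℝ) : pd_s (pd_s φ) t s = B φ (t, s) (0, 1) (0, 1) := by
  have he : (fun s' => pd_s φ t s') = fun s' => fderiv ℝ (Function.uncurry φ) (t, s') (0, 1) :=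
    funext fun s' => pds_val hφ t s'
  show deriv (fun s' => pd_s φ t s') s = _
  rw [he]
  exact (hHs hφ (0, 1) t s).deriv

lemma Bsymm (p v w : ℝ × ℝ) : B φ p v w = B φ p w v := by
  have h1 : Differentiable ℝ (fderiv ℝ (Function.uncurry φ)) :=
    (hφ.fderiv_right (m := (⊤ : ℕ∞)) ((by simp))).differentiable (by simp)
  exact second_derivative_symmetric
    (fun y => ((hφ.differentiable (by simp)) y).hasFDerivAt) (h1 p).hasFDerivAt v w

lemma psit (t s : ℝ) :
    pd_t (Svf φ) t s = pd_t φ t s + t * B φ (t, s) (1, 0) (1, 0)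
      + s * B φ (t, s) (1, 0) (0, 1) := by
  have he : (fun t' => Svf φ t' s)
      = fun t' => t' * fderiv ℝ (Function.uncurry φ) (t', s) (1, 0)
        + s * fderiv ℝ (Function.uncurry φ) (t', s) (0, 1) := by
    funext t'
    rw [Svf, pdt_val hφ, pds_val hφ]
  have hd : HasDerivAt (fun t' => t' * fderiv ℝ (Function.uncurry φ) (t', s) (1, 0)
        + s * fderiv ℝ (Function.uncurry φ) (t', s) (0, 1))
      ((1 * fderiv ℝ (Function.uncurry φ) (t, s) (1, 0) + t * B φ (t, s) (1, 0) (1, 0))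
        + s * B φ (t, s) (1, 0) (0, 1)) t :=
    ((hasDerivAt_id t).mul (hHt hφ (1, 0) t s)).add ((hHt hφ (0, 1) t s).const_mul s)
  show deriv (fun t' => Svf φ t' s) t = _
  rw [he, hd.deriv, pdt_val hφ]
  ring

lemma psis (t s : ℝ) :
    pd_s (Svf φ) t s = pd_s φ t s + t * B φ (t, s) (0, 1) (1, 0)
      + s * B φ (t, s) (0, 1) (0, 1) := by
  have he : (fun s' => Svf φ t s')
      = fun s' => t * fderiv ℝ (Function.uncurry φ) (t, s') (1, 0)
        + s' * fderiv ℝ (Function.uncurry φ) (t, s') (0, 1) := by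
    funext s'
    rw [Svf, pdt_val hφ, pds_val hφ]
  have hd : HasDerivAt (fun s' => t * fderiv ℝ (Function.uncurry φ) (t, s') (1, 0)
        + s' * fderiv ℝ (Function.uncurry φ) (t, s') (0, 1))
      (t * B φ (t, s) (0, 1) (1, 0)
        + (1 * fderiv ℝ (Function.uncurry φ) (t, s) (0, 1) + s * B φ (t, s) (0, 1) (0, 1))) s :=
    ((hHs hφ (1, 0) t s).const_mul t).add ((hasDerivAt_id s).mul (hHs hφ (0, 1) t s))
  show deriv (fun s' => Svf φ t s') s = _
  rw [he, hd.deriv, pds_val hφ]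
  ring

end KStest
end

/-- Proposition 22, parts 1 and 2 of the paper (spherically symmetric case), a
Klainerman-Sideris type estimate: for solutions of the radial Schwarzschild wave
equation, the weight `(t - r*)` is gained on second derivatives involving `∂_t`,
in terms of first derivatives of `φ` and of `ψ = Sφ = t ∂_tφ + s ∂_sφ`. -/
theorem klainerman_sideris_estimate
    (M : ℝ) (hM : 0 < M) (r : ℝ → ℝ) (hr : IsTortoise M r) :
    ∃ C : ℝ, 0 < C ∧
      ∀ φ : ℝ → ℝ → ℝ, ContDiff ℝ (⊤ : ℕ∞) (Function.uncurry φ) →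
        (∀ t s, pd_t (pd_t φ) t s
          = ((r s) ^ 2)⁻¹ * deriv (fun x => (r x) ^ 2 * pd_s φ t x) s) →
        ∀ t s : ℝ, 1 ≤ t → max (t / 2) (|s| / 2) ≤ t + s →
          |(t - s) * pd_t (pd_t φ) t s|
              ≤ C * (|pd_t (Svf φ) t s| + |pd_s (Svf φ) t s|
                  + |pd_t φ t s| + |pd_s φ t s|) ∧
          |(t - s) * pd_s (pd_t φ) t s|
              ≤ C * (|pd_t (Svf φ) t s| + |pd_s (Svf φ) t s|
                  + |pd_t φ t s| + |pd_s φ t s|) := by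
  classical
  obtain ⟨hr2M, hrd, hr0⟩ := hr
  have hrpos : ∀ x, 0 < r x := fun x => lt_trans (by linarith) (hr2M x)
  have hμ : ∀ x, 0 < 1 - 2 * M / r x := by
    intro x
    rw [sub_pos, div_lt_one (hrpos x)]
    exact hr2M x
  have htort := aux_tortoise M hM r ⟨hr2M, hrd, hr0⟩
  refine ⟨14, by norm_num, ?_⟩
  intro φ hφ hwave t s ht hts
  -- second derivatives
  set F := Function.uncurry φ with hF
  set a := KStest.B φ (t, s) (1, 0) (1, 0) with ha
  set b := KStest.B φ (t, s) (0, 1) (1, 0) with hb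
  set c := KStest.B φ (t, s) (0, 1) (0, 1) with hc
  set p := pd_t φ t s with hp
  set q := pd_s φ t s with hq
  set k := 2 * (1 - 2 * M / r s) / r s with hk
  have hsymm : KStest.B φ (t, s) (1, 0) (0, 1) = b := KStest.Bsymm hφ (t, s) (1, 0) (0, 1)
  have hBtt : pd_t (pd_t φ) t s = a := KStest.Btt hφ t s
  have hBts : pd_s (pd_t φ) t s = b := KStest.Bts hφ t s
  have hBss : pd_s (pd_s φ) t s = c := KStest.Bss hφ t s
  -- the wave equation at (t, s)
  have hwa : a = c + k * q := by
    have h2 : HasDerivAt (fun x => pd_s φ t x) c s := by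
      have he : (fun x => pd_s φ t x) = fun x => fderiv ℝ F (t, x) (0, 1) :=
        funext fun x => KStest.pds_val hφ t x
      rw [he]
      exact KStest.hHs hφ (0, 1) t s
    have h1 : HasDerivAt (fun x => (r x) ^ 2) (2 * r s ^ 1 * (1 - 2 * M / r s)) s :=
      (hrd s).pow 2
    have h3 : deriv (fun x => r x ^ 2 * pd_s φ t x) s = _ := (h1.mul h2).deriv
    have h4 := hwave t s
    rw [h3, hBtt] at h4
    have hrs := hrpos s
    rw [h4, hk, hq]
    field_simp
    ring
  -- first derivatives of ψ
  have hu : pd_t (Svf φ) t s = p + t * a + s * b := by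
    rw [KStest.psit hφ t s, hsymm, hp, ha]
  have hw : pd_s (Svf φ) t s = q + t * b + s * c := by
    rw [KStest.psis hφ t s, hq, hb, hc]
  set u := pd_t (Svf φ) t s
  set w := pd_s (Svf φ) t s
  -- region inequalities
  have hts1 : t / 2 ≤ t + s := le_trans (le_max_left _ _) hts
  have hts2 : |s| / 2 ≤ t + s := le_trans (le_max_right _ _) hts
  have h0 : (0:ℝ) < t + s := by linarith
  have htb : t ≤ 2 * (t + s) := by linarith
  have hsb : |s| ≤ 2 * (t + s) := by linarith
  have hknn : 0 ≤ k := by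
    rw [hk]
    apply div_nonneg _ (hrpos s).le
    linarith [hμ s]
  have hsk : |s| * k ≤ 6 := by
    have h1 := htort s
    have hrs := hrpos s
    have e1 : |s| * k = 2 * (|s| * (r s - 2 * M)) / (r s) ^ 2 := by
      rw [hk]
      field_simp
    rw [e1]
    rw [div_le_iff₀ (by positivity)]
    nlinarith
  clear_value a b c p q k u w
  set S := |u| + |w| + |p| + |q| with hS
  have hSnn : 0 ≤ S := by positivity
  have habs : ∀ x y z : ℝ, |x - y - z| ≤ |x| + |y| + |z| := by
    intro x y z
    calc |x - y - z| = |x + -y + -z| := by ring_nf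
      _ ≤ |x + -y| + |-z| := abs_add_le _ _
      _ ≤ |x| + |-y| + |-z| := by linarith [abs_add_le x (-y)]
      _ = |x| + |y| + |z| := by rw [abs_neg, abs_neg]
  have habs2 : ∀ x y z : ℝ, |x - y + z| ≤ |x| + |y| + |z| := by
    intro x y z
    calc |x - y + z| = |x + -y + z| := by ring_nf
      _ ≤ |x + -y| + |z| := abs_add_le _ _
      _ ≤ |x| + |-y| + |z| := by linarith [abs_add_le x (-y)]
      _ = |x| + |y| + |z| := by rw [abs_neg]
  have ht0 : (0:ℝ) ≤ t := by linarith
  have hterm1 : |t * (u - p)| ≤ 2 * (t + s) * (|u| + |p|) := by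
    rw [abs_mul, abs_of_nonneg ht0]
    calc t * |u - p| ≤ t * (|u| + |p|) := by
          apply mul_le_mul_of_nonneg_left (abs_sub _ _) ht0
      _ ≤ 2 * (t + s) * (|u| + |p|) := by
          apply mul_le_mul_of_nonneg_right htb (by positivity)
  have hterm2 : |s * (w - q)| ≤ 2 * (t + s) * (|w| + |q|) := by
    rw [abs_mul]
    calc |s| * |w - q| ≤ |s| * (|w| + |q|) := by
          apply mul_le_mul_of_nonneg_left (abs_sub _ _) (abs_nonneg s)
      _ ≤ 2 * (t + s) * (|w| + |q|) := by
          apply mul_le_mul_of_nonneg_right hsb (by positivity)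
  have hterm3 : |s ^ 2 * k * q| ≤ 2 * (t + s) * (6 * |q|) := by
    have e1 : |s ^ 2 * k * q| = |s| * (|s| * k) * |q| := by
      rw [abs_mul, abs_mul, abs_of_nonneg hknn, abs_of_nonneg (sq_nonneg s),
        show s ^ 2 = |s| * |s| by rw [abs_mul_abs_self]; ring]
      ring
    rw [e1]
    calc |s| * (|s| * k) * |q| ≤ |s| * 6 * |q| := by
          apply mul_le_mul_of_nonneg_right _ (abs_nonneg q)
          exact mul_le_mul_of_nonneg_left hsk (abs_nonneg s)
      _ ≤ 2 * (t + s) * 6 * |q| := by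
          apply mul_le_mul_of_nonneg_right _ (abs_nonneg q)
          apply mul_le_mul_of_nonneg_right hsb (by norm_num)
      _ = 2 * (t + s) * (6 * |q|) := by ring
  have hterm4 : |t * s * k * q| ≤ 2 * (t + s) * (6 * |q|) := by
    have e1 : |t * s * k * q| = t * (|s| * k) * |q| := by
      rw [abs_mul, abs_mul, abs_mul, abs_of_nonneg ht0, abs_of_nonneg hknn]
      ring
    rw [e1]
    calc t * (|s| * k) * |q| ≤ t * 6 * |q| := by
          apply mul_le_mul_of_nonneg_right _ (abs_nonneg q)
          exact mul_le_mul_of_nonneg_left hsk ht0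
      _ ≤ 2 * (t + s) * 6 * |q| := by
          apply mul_le_mul_of_nonneg_right _ (abs_nonneg q)
          apply mul_le_mul_of_nonneg_right htb (by norm_num)
      _ = 2 * (t + s) * (6 * |q|) := by ring
  constructor
  · -- goal 1
    rw [hBtt]
    have key : (t + s) * ((t - s) * a) = t * (u - p) - s * (w - q) - s ^ 2 * k * q := by
      rw [hu, hw, hwa]
      ring
    have hbig : |(t + s) * ((t - s) * a)| ≤ (t + s) * (14 * S) := by
      rw [key]
      calc |t * (u - p) - s * (w - q) - s ^ 2 * k * q|
          ≤ |t * (u - p)| + |s * (w - q)| + |s ^ 2 * k * q| := habs _ _ _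
        _ ≤ 2 * (t + s) * (|u| + |p|) + 2 * (t + s) * (|w| + |q|)
            + 2 * (t + s) * (6 * |q|) := by linarith
        _ = (t + s) * (2 * (|u| + |p|) + 2 * (|w| + |q|) + 12 * |q|) := by ring
        _ ≤ (t + s) * (14 * S) := by
            apply mul_le_mul_of_nonneg_left _ h0.le
            rw [hS]
            linarith [abs_nonneg u, abs_nonneg w, abs_nonneg p, abs_nonneg q]
    rw [abs_mul, abs_of_pos h0] at hbig
    exact le_of_mul_le_mul_left hbig h0
  · -- goal 2
    rw [hBts]
    have key : (t + s) * ((t - s) * b) = t * (w - q) - s * (u - p) + t * s * k * q := by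
      rw [hu, hw, hwa]
      ring
    have hbig : |(t + s) * ((t - s) * b)| ≤ (t + s) * (14 * S) := by
      rw [key]
      calc |t * (w - q) - s * (u - p) + t * s * k * q|
          ≤ |t * (w - q)| + |s * (u - p)| + |t * s * k * q| := habs2 _ _ _
        _ ≤ 2 * (t + s) * (|w| + |q|) + 2 * (t + s) * (|u| + |p|)
            + 2 * (t + s) * (6 * |q|) := by
            have e1 : |t * (w - q)| ≤ 2 * (t + s) * (|w| + |q|) := by
              rw [abs_mul, abs_of_nonneg ht0]
              calc t * |w - q| ≤ t * (|w| + |q|) :=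
                    mul_le_mul_of_nonneg_left (abs_sub _ _) ht0
                _ ≤ 2 * (t + s) * (|w| + |q|) :=
                    mul_le_mul_of_nonneg_right htb (by positivity)
            have e2 : |s * (u - p)| ≤ 2 * (t + s) * (|u| + |p|) := by
              rw [abs_mul]
              calc |s| * |u - p| ≤ |s| * (|u| + |p|) :=
                    mul_le_mul_of_nonneg_left (abs_sub _ _) (abs_nonneg s)
                _ ≤ 2 * (t + s) * (|u| + |p|) :=
                    mul_le_mul_of_nonneg_right hsb (by positivity)
            linarith
        _ = (t + s) * (2 * (|u| + |p|) + 2 * (|w| + |q|) + 12 * |q|) := by ring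
        _ ≤ (t + s) * (14 * S) := by
            apply mul_le_mul_of_nonneg_left _ h0.le
            rw [hS]
            linarith [abs_nonneg u, abs_nonneg w, abs_nonneg p, abs_nonneg q]
    rw [abs_mul, abs_of_pos h0] at hbig
    exact le_of_mul_le_mul_left hbig h0
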